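/- (Local solution recovery II, second part.) Suppose there exists a set D ⊆ ℝ^n × ℝ^J_+ (where ℝ^J_+ := {r ∈ ℝ^J : r ≥ 0}) that is dense in ℝ^n × ℝ^J_+. Let (x̄, λ̄) with λ̄ ≥ 0 be a local optimal solution of the original bilevel problem, i.e., x̄ ∈ S_p(λ̄) and there exists ε₁ > 0 such that L(x̄) ≤ L(x) whenever λ ≥ 0, x ∈ S_p(λ), and ‖(x,λ) − (x̄,λ̄)‖ ≤ ε₁. Set r̄ := P(x̄). Assume there exist a bounded set Λ ⊆ ℝ^J and ε > 0 such that Λ ∩ M(x,r) ≠ ∅ for every (x,r) ∈ D with ‖(x,r) − (x̄,r̄)‖ ≤ ε, and assume M(x̄,r̄) = {λ̄} is a singleton. Then (x̄, r̄) is a local optimal solution of the reformulated bilevel problem, i.e., x̄ ∈ S_c(r̄) and there exists ε' > 0 such that L(x̄) ≤ L(x) whenever r ≥ 0, x ∈ S_c(r), and ‖(x,r) − (x̄,r̄)‖ ≤ ε'. -/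

import Mathlib

open scoped InnerProductSpace
open Filter Topology

noncomputable section

/-- Euclidean space `ℝ^m`. -/
abbrev Eu (m : ℕ) : Type := EuclideanSpace ℝ (Fin m)

/-- Subgradient set (in the sense of convex analysis) of `f` at `x`. -/
def Subgrad {E : Type*} [NormedAddCommGroup E] [InnerProductSpace ℝ E]
    (f : E → ℝ) (x : E) : Set E :=
  {g | ∀ y, f x + ⟪g, y - x⟫_ℝ ≤ f y}

/-- Feasible region `F(r) = {x : P_i(x) ≤ r_i, i = 1,…,J}`. -/
def Feas {n J : ℕ} (P : Fin J → Eu n → ℝ) (r : Eu J) : Set (Eu n) :=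
  {x | ∀ i, P i x ≤ r i}

/-- `S_p(λ)`: global minimizers of `x' ↦ l(x') + Σ_i λ_i P_i(x')`. -/
def Sp {n J : ℕ} (l : Eu n → ℝ) (P : Fin J → Eu n → ℝ) (lam : Eu J) : Set (Eu n) :=
  {x | ∀ x', l x + ∑ i, lam i * P i x ≤ l x' + ∑ i, lam i * P i x'}

/-- `S_c(r)`: global minimizers of `l` over `F(r)`. -/
def Sc {n J : ℕ} (l : Eu n → ℝ) (P : Fin J → Eu n → ℝ) (r : Eu J) : Set (Eu n) :=
  {x | x ∈ Feas P r ∧ ∀ x' ∈ Feas P r, l x ≤ l x'}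

/-- The multiplier set `M(x,r)`. -/
def Mset {n J : ℕ} (l : Eu n → ℝ) (P : Fin J → Eu n → ℝ) (x : Eu n) (r : Eu J) :
    Set (Eu J) :=
  {lam | (∀ i, 0 ≤ lam i) ∧
    (∃ u ∈ Subgrad l x, ∃ v : Fin J → Eu n,
      (∀ i, v i ∈ Subgrad (P i) x) ∧ u + ∑ i, lam i • v i = 0) ∧
    (∀ i, lam i * (P i x - r i) = 0)}

lemma sqrt_add_sq_le' {a b : ℝ} (ha : 0 ≤ a) (hb : 0 ≤ b) :
    Real.sqrt (a ^ 2 + b ^ 2) ≤ a + b := by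
  have h := Real.sqrt_le_sqrt (show a ^ 2 + b ^ 2 ≤ (a + b) ^ 2 by nlinarith)
  rwa [Real.sqrt_sq (by linarith)] at h

lemma left_le_sqrt' {a b : ℝ} (ha : 0 ≤ a) : a ≤ Real.sqrt (a ^ 2 + b ^ 2) := by
  have h := Real.sqrt_le_sqrt (show a ^ 2 ≤ a ^ 2 + b ^ 2 by nlinarith)
  rwa [Real.sqrt_sq ha] at h

lemma right_le_sqrt' {a b : ℝ} (hb : 0 ≤ b) : b ≤ Real.sqrt (a ^ 2 + b ^ 2) := by
  have h := Real.sqrt_le_sqrt (show b ^ 2 ≤ a ^ 2 + b ^ 2 by nlinarith)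
  rwa [Real.sqrt_sq hb] at h

lemma subgrad_bound {n : ℕ} (f : Eu n → ℝ) (hf : Continuous f) (x : Eu n) (R : ℝ)
    (hR : 0 ≤ R) :
    ∃ C : ℝ, ∀ z ∈ Metric.closedBall x R, ∀ g ∈ Subgrad f z, ‖g‖ ≤ C := by
  have hK : IsCompact (Metric.closedBall x (R + 1)) := isCompact_closedBall x (R + 1)
  have hKne : (Metric.closedBall x (R + 1)).Nonempty :=
    ⟨x, by simp [Metric.mem_closedBall]; linarith⟩
  obtain ⟨a, haK, hamax⟩ := hK.exists_isMaxOn hKne hf.continuousOn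
  obtain ⟨b, hbK, hbmin⟩ := hK.exists_isMinOn hKne hf.continuousOn
  refine ⟨f a - f b, fun z hz g hg => ?_⟩
  have hzK : z ∈ Metric.closedBall x (R + 1) :=
    Metric.closedBall_subset_closedBall (by linarith) hz
  rcases eq_or_ne g 0 with h0 | h0
  · simp only [h0, norm_zero]
    have := isMinOn_iff.mp hbmin a haK
    linarith
  · have hng : ‖g‖ ≠ 0 := norm_ne_zero_iff.mpr h0
    set y := z + ‖g‖⁻¹ • g with hy
    have hyK : y ∈ Metric.closedBall x (R + 1) := by
      have h1 : y - x = (z - x) + ‖g‖⁻¹ • g := by rw [hy]; abel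
      have h2 : ‖y - x‖ ≤ ‖z - x‖ + ‖‖g‖⁻¹ • g‖ := by rw [h1]; exact norm_add_le _ _
      have h3 : ‖‖g‖⁻¹ • g‖ = 1 := by
        rw [norm_smul, norm_inv, norm_norm, inv_mul_cancel₀ hng]
      have h4 : ‖z - x‖ ≤ R := by rwa [← dist_eq_norm]
      rw [Metric.mem_closedBall, dist_eq_norm]
      linarith
    have hsub := hg y
    have hinner : ⟪g, y - z⟫_ℝ = ‖g‖ := by
      rw [hy, add_sub_cancel_left, real_inner_smul_right, real_inner_self_eq_norm_sq,
        pow_two, ← mul_assoc, inv_mul_cancel₀ hng, one_mul]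
    rw [hinner] at hsub
    have h5 := isMaxOn_iff.mp hamax y hyK
    have h6 := isMinOn_iff.mp hbmin z hzK
    linarith

lemma Mset_closed {n J : ℕ} {l : Eu n → ℝ} {P : Fin J → Eu n → ℝ}
    (hlc : Continuous l) (hPc : ∀ i, Continuous (P i))
    {x : Eu n} {r : Eu J} {lam : Eu J}
    {xs : ℕ → Eu n} {rs : ℕ → Eu J} {ls : ℕ → Eu J}
    (hx : Tendsto xs atTop (𝓝 x)) (hr : Tendsto rs atTop (𝓝 r))
    (hl : Tendsto ls atTop (𝓝 lam))
    (hmem : ∀ k, ls k ∈ Mset l P (xs k) (rs k)) :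
    lam ∈ Mset l P x r := by
  have hli : ∀ i, Tendsto (fun k => ls k i) atTop (𝓝 (lam i)) :=
    fun i => ((PiLp.continuous_apply 2 _ i).tendsto lam).comp hl
  have hnn : ∀ i, 0 ≤ lam i := fun i =>
    ge_of_tendsto' (hli i) (fun k => (hmem k).1 i)
  have hcomp : ∀ i, lam i * (P i x - r i) = 0 := by
    intro i
    have h1 : Tendsto (fun k => ls k i * (P i (xs k) - rs k i)) atTop
        (𝓝 (lam i * (P i x - r i))) :=
      (hli i).mul ((((hPc i).tendsto x).comp hx).sub (((PiLp.continuous_apply 2 _ i).tendsto r).comp hr))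
    have h2 : (fun k => ls k i * (P i (xs k) - rs k i)) = fun _ => (0 : ℝ) :=
      funext fun k => (hmem k).2.2 i
    rw [h2] at h1
    exact tendsto_nhds_unique h1 tendsto_const_nhds
  choose us hus vs hvs heq using fun k => (hmem k).2.1
  obtain ⟨R, hRr⟩ : ∃ R, Set.range xs ⊆ Metric.closedBall x R :=
    (Metric.isBounded_range_of_tendsto xs hx).subset_closedBall x
  have hR0 : 0 ≤ R := le_trans dist_nonneg (hRr ⟨0, rfl⟩)
  obtain ⟨Cl, hCl⟩ := subgrad_bound l hlc x R hR0
  choose Cp hCp using fun i => subgrad_bound (P i) (hPc i) x R hR0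
  set s : Set (Eu n × (Fin J → Eu n)) :=
    Metric.closedBall 0 Cl ×ˢ Set.univ.pi (fun i => Metric.closedBall 0 (Cp i)) with hs
  have hsc : IsCompact s :=
    (isCompact_closedBall 0 Cl).prod (isCompact_univ_pi fun i => isCompact_closedBall 0 (Cp i))
  have hmems : ∀ k, (us k, vs k) ∈ s := by
    intro k
    refine ⟨?_, ?_⟩
    · rw [Metric.mem_closedBall, dist_zero_right]
      exact hCl (xs k) (hRr ⟨k, rfl⟩) (us k) (hus k)
    · intro i _
      rw [Metric.mem_closedBall, dist_zero_right]
      exact hCp i (xs k) (hRr ⟨k, rfl⟩) (vs k i) (hvs k i)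
  obtain ⟨w, -, φ, hφ, hwt⟩ := hsc.tendsto_subseq hmems
  have hxφ : Tendsto (fun k => xs (φ k)) atTop (𝓝 x) := hx.comp hφ.tendsto_atTop
  have hlφ : Tendsto (fun k => ls (φ k)) atTop (𝓝 lam) := hl.comp hφ.tendsto_atTop
  have huφ : Tendsto (fun k => us (φ k)) atTop (𝓝 w.1) := (continuous_fst.tendsto w).comp hwt
  have hvφ : ∀ i, Tendsto (fun k => vs (φ k) i) atTop (𝓝 (w.2 i)) :=
    fun i => ((continuous_apply i).tendsto w.2).comp ((continuous_snd.tendsto w).comp hwt)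
  have hu : w.1 ∈ Subgrad l x := by
    intro y
    have hT : Tendsto (fun k => l (xs (φ k)) + ⟪us (φ k), y - xs (φ k)⟫_ℝ) atTop
        (𝓝 (l x + ⟪w.1, y - x⟫_ℝ)) :=
      ((hlc.tendsto x).comp hxφ).add (huφ.inner (tendsto_const_nhds.sub hxφ))
    exact le_of_tendsto hT (Eventually.of_forall fun k => hus (φ k) y)
  have hv : ∀ i, w.2 i ∈ Subgrad (P i) x := by
    intro i y
    have hT : Tendsto (fun k => P i (xs (φ k)) + ⟪vs (φ k) i, y - xs (φ k)⟫_ℝ) atTop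
        (𝓝 (P i x + ⟪w.2 i, y - x⟫_ℝ)) :=
      (((hPc i).tendsto x).comp hxφ).add ((hvφ i).inner (tendsto_const_nhds.sub hxφ))
    exact le_of_tendsto hT (Eventually.of_forall fun k => hvs (φ k) i y)
  have hsum : Tendsto (fun k => us (φ k) + ∑ i, ls (φ k) i • vs (φ k) i) atTop
      (𝓝 (w.1 + ∑ i, lam i • w.2 i)) := by
    refine huφ.add (tendsto_finset_sum _ fun i _ => ?_)
    exact (((PiLp.continuous_apply 2 _ i).tendsto lam).comp hlφ).smul (hvφ i)
  have hzero : (fun k => us (φ k) + ∑ i, ls (φ k) i • vs (φ k) i) = fun _ => (0 : Eu n) :=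
    funext fun k => heq (φ k)
  rw [hzero] at hsum
  exact ⟨hnn, ⟨w.1, hu, w.2, hv, tendsto_nhds_unique hsum tendsto_const_nhds⟩, hcomp⟩

lemma mem_Sp_of_mem_Mset {n J : ℕ} {l : Eu n → ℝ} {P : Fin J → Eu n → ℝ}
    {x : Eu n} {r lam : Eu J} (h : lam ∈ Mset l P x r) : x ∈ Sp l P lam := by
  obtain ⟨hnn, ⟨u, hu, v, hv, heq⟩, -⟩ := h
  intro x'
  have h1 : l x + ⟪u, x' - x⟫_ℝ ≤ l x' := hu x'
  have h2 : ∀ i ∈ Finset.univ, lam i * P i x + ⟪lam i • v i, x' - x⟫_ℝ ≤ lam i * P i x' := by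
    intro i _
    have h3 := hv i x'
    have h4 := mul_le_mul_of_nonneg_left h3 (hnn i)
    rw [real_inner_smul_left]
    nlinarith [h4]
  have h5 := Finset.sum_le_sum h2
  rw [Finset.sum_add_distrib, ← sum_inner, eq_neg_of_add_eq_zero_right heq,
    inner_neg_left] at h5
  linarith

theorem stmt6 {n J : ℕ} (hn : 1 ≤ n) (hJ : 1 ≤ J)
    (l : Eu n → ℝ) (P : Fin J → Eu n → ℝ)
    (hlcv : ConvexOn ℝ Set.univ l) (hlc : Continuous l)
    (hPcv : ∀ i, ConvexOn ℝ Set.univ (P i)) (hPc : ∀ i, Continuous (P i))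
    (hPnn : ∀ i x, 0 ≤ P i x)
    (L : Eu n → ℝ) (hLcv : ConvexOn ℝ Set.univ L) (hLc : Continuous L)
    (D : Set (Eu n × Eu J))
    (hDsub : D ⊆ {p : Eu n × Eu J | ∀ i, 0 ≤ p.2 i})
    (hDdense : {p : Eu n × Eu J | ∀ i, 0 ≤ p.2 i} ⊆ closure D)
    (xb : Eu n) (lamb : Eu J) (hlamb : ∀ i, 0 ≤ lamb i)
    (hxb : xb ∈ Sp l P lamb)
    (hloc : ∃ ε₁ > (0 : ℝ), ∀ (x : Eu n) (lam : Eu J), (∀ i, 0 ≤ lam i) →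
      x ∈ Sp l P lam → Real.sqrt (‖x - xb‖ ^ 2 + ‖lam - lamb‖ ^ 2) ≤ ε₁ → L xb ≤ L x)
    (rb : Eu J) (hrb : ∀ i, rb i = P i xb)
    (Λ : Set (Eu J)) (hΛ : Bornology.IsBounded Λ)
    (ε : ℝ) (hε : 0 < ε)
    (hΛM : ∀ p ∈ D, Real.sqrt (‖p.1 - xb‖ ^ 2 + ‖p.2 - rb‖ ^ 2) ≤ ε →
      (Λ ∩ Mset l P p.1 p.2).Nonempty)
    (hsingle : Mset l P xb rb = {lamb}) :
    xb ∈ Sc l P rb ∧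
      ∃ ε' > (0 : ℝ), ∀ (x : Eu n) (r : Eu J), (∀ i, 0 ≤ r i) → x ∈ Sc l P r →
        Real.sqrt (‖x - xb‖ ^ 2 + ‖r - rb‖ ^ 2) ≤ ε' → L xb ≤ L x := by
  -- Part 1: xb ∈ Sc l P rb
  have part1 : xb ∈ Sc l P rb := by
    constructor
    · intro i; rw [hrb i]
    · intro x' hx'
      have h1 := hxb x'
      have h2 : ∑ i, lamb i * P i x' ≤ ∑ i, lamb i * P i xb :=
        Finset.sum_le_sum fun i _ =>
          mul_le_mul_of_nonneg_left (le_of_le_of_eq (hx' i) (by rw [hrb i])) (hlamb i)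
      linarith
  refine ⟨part1, ?_⟩
  obtain ⟨ε₁, hε₁, hloc'⟩ := hloc
  obtain ⟨RΛ, hRΛ⟩ := hΛ.closure.subset_closedBall (0 : Eu J)
  -- Claim A
  have claimA : ∀ x : Eu n, ∀ r : Eu J, (∀ i, 0 ≤ r i) →
      Real.sqrt (‖x - xb‖ ^ 2 + ‖r - rb‖ ^ 2) < ε →
      ∃ lam', lam' ∈ Mset l P x r ∧ lam' ∈ closure Λ := by
    intro x r hrnn hdlt
    have hq : (x, r) ∈ closure D := hDdense (by exact hrnn)
    obtain ⟨p, hpD, hp⟩ := mem_closure_iff_seq_limit.mp hq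
    have hcont : Tendsto (fun k => Real.sqrt (‖(p k).1 - xb‖ ^ 2 + ‖(p k).2 - rb‖ ^ 2)) atTop
        (𝓝 (Real.sqrt (‖x - xb‖ ^ 2 + ‖r - rb‖ ^ 2))) := by
      have hc : Continuous (fun q : Eu n × Eu J =>
          Real.sqrt (‖q.1 - xb‖ ^ 2 + ‖q.2 - rb‖ ^ 2)) := by
        apply Real.continuous_sqrt.comp
        exact (((continuous_fst.sub continuous_const).norm.pow 2).add
          ((continuous_snd.sub continuous_const).norm.pow 2))
      exact (hc.tendsto (x, r)).comp hp
    obtain ⟨N, hN⟩ := eventually_atTop.mp (hcont.eventually_lt_const hdlt)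
    set p' : ℕ → Eu n × Eu J := fun k => p (k + N) with hp'def
    have hp' : Tendsto p' atTop (𝓝 (x, r)) := hp.comp (tendsto_add_atTop_nat N)
    have hsel : ∀ k, (Λ ∩ Mset l P (p' k).1 (p' k).2).Nonempty :=
      fun k => hΛM (p' k) (hpD (k + N)) (le_of_lt (hN (k + N) (Nat.le_add_left N k)))
    choose lams hlams using hsel
    have hmemB : ∀ k, lams k ∈ Metric.closedBall (0 : Eu J) RΛ :=
      fun k => hRΛ (subset_closure (hlams k).1)
    obtain ⟨lam', -, φ, hφ, hlt⟩ := (isCompact_closedBall (0 : Eu J) RΛ).tendsto_subseq hmemB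
    have hxφ : Tendsto (fun k => (p' (φ k)).1) atTop (𝓝 x) :=
      (continuous_fst.tendsto (x, r)).comp (hp'.comp hφ.tendsto_atTop)
    have hrφ : Tendsto (fun k => (p' (φ k)).2) atTop (𝓝 r) :=
      (continuous_snd.tendsto (x, r)).comp (hp'.comp hφ.tendsto_atTop)
    refine ⟨lam', Mset_closed hlc hPc hxφ hrφ hlt (fun k => (hlams (φ k)).2), ?_⟩
    exact mem_closure_of_tendsto hlt (Eventually.of_forall fun k => (hlams (φ k)).1)
  -- Claim B
  have claimB : ∀ δ : ℝ, 0 < δ → ∃ η : ℝ, 0 < η ∧ ∀ x : Eu n, ∀ r : Eu J,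
      (∀ i, 0 ≤ r i) → Real.sqrt (‖x - xb‖ ^ 2 + ‖r - rb‖ ^ 2) ≤ η →
      ∀ lam', lam' ∈ Mset l P x r → lam' ∈ closure Λ → ‖lam' - lamb‖ ≤ δ := by
    intro δ hδ
    by_contra hcon
    push_neg at hcon
    have hcon' : ∀ k : ℕ, ∃ x : Eu n, ∃ r : Eu J, (∀ i, 0 ≤ r i) ∧
        Real.sqrt (‖x - xb‖ ^ 2 + ‖r - rb‖ ^ 2) ≤ 1 / ((k : ℝ) + 1) ∧
        ∃ lam', lam' ∈ Mset l P x r ∧ lam' ∈ closure Λ ∧ δ < ‖lam' - lamb‖ := by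
      intro k
      obtain ⟨x, r, hrnn, hsq, lam', hM, hcl, hfar⟩ := hcon (1 / ((k : ℝ) + 1)) (by positivity)
      exact ⟨x, r, hrnn, hsq, lam', hM, hcl, hfar⟩
    choose xs rs hrnn hsq lams hlM hlcl hlfar using hcon'
    have hxnorm : ∀ k, ‖xs k - xb‖ ≤ 1 / ((k : ℝ) + 1) := fun k =>
      le_trans (left_le_sqrt' (norm_nonneg _)) (hsq k)
    have hrnorm : ∀ k, ‖rs k - rb‖ ≤ 1 / ((k : ℝ) + 1) := fun k =>
      le_trans (right_le_sqrt' (norm_nonneg _)) (hsq k)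
    have hxs : Tendsto xs atTop (𝓝 xb) := by
      rw [tendsto_iff_dist_tendsto_zero]
      refine squeeze_zero (fun k => dist_nonneg) (fun k => ?_)
        tendsto_one_div_add_atTop_nhds_zero_nat
      rw [dist_eq_norm]; exact hxnorm k
    have hrs : Tendsto rs atTop (𝓝 rb) := by
      rw [tendsto_iff_dist_tendsto_zero]
      refine squeeze_zero (fun k => dist_nonneg) (fun k => ?_)
        tendsto_one_div_add_atTop_nhds_zero_nat
      rw [dist_eq_norm]; exact hrnorm k
    have hmemB : ∀ k, lams k ∈ Metric.closedBall (0 : Eu J) RΛ := fun k => hRΛ (hlcl k)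
    obtain ⟨lam', -, φ, hφ, hlt⟩ := (isCompact_closedBall (0 : Eu J) RΛ).tendsto_subseq hmemB
    have hmemM : lam' ∈ Mset l P xb rb :=
      Mset_closed hlc hPc (hxs.comp hφ.tendsto_atTop) (hrs.comp hφ.tendsto_atTop) hlt
        (fun k => hlM (φ k))
    have heq : lam' = lamb := by rwa [hsingle] at hmemM
    have hfar' : δ ≤ ‖lam' - lamb‖ := by
      refine ge_of_tendsto ((hlt.sub tendsto_const_nhds).norm) ?_
      exact Eventually.of_forall fun k => le_of_lt (hlfar (φ k))
    rw [heq, sub_self, norm_zero] at hfar'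
    linarith
  obtain ⟨η, hη, hB⟩ := claimB (ε₁ / 2) (by linarith)
  refine ⟨min (min η (ε / 2)) (ε₁ / 2), lt_min (lt_min hη (by linarith)) (by linarith), ?_⟩
  intro x r hrnn _ hd
  have hdε : Real.sqrt (‖x - xb‖ ^ 2 + ‖r - rb‖ ^ 2) < ε :=
    lt_of_le_of_lt (hd.trans ((min_le_left _ _).trans (min_le_right _ _))) (by linarith)
  obtain ⟨lam', hlam'M, hlam'cl⟩ := claimA x r hrnn hdε
  have hxsp : x ∈ Sp l P lam' := mem_Sp_of_mem_Mset hlam'M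
  have hblam : ‖lam' - lamb‖ ≤ ε₁ / 2 :=
    hB x r hrnn (hd.trans ((min_le_left _ _).trans (min_le_left _ _))) lam' hlam'M hlam'cl
  have h1 : ‖x - xb‖ ≤ ε₁ / 2 :=
    (left_le_sqrt' (norm_nonneg _)).trans (hd.trans (min_le_right _ _))
  have h2 : Real.sqrt (‖x - xb‖ ^ 2 + ‖lam' - lamb‖ ^ 2) ≤ ε₁ :=
    (sqrt_add_sq_le' (norm_nonneg _) (norm_nonneg _)).trans (by linarith)
  exact hloc' x lam' hlam'M.1 hxsp h2
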